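/- arXiv:1409.1842 — 2 statements merged into one kernel-verified Lean document; each statement's English description precedes it below -/
import Mathlib

section
/- The FPOP set-update recursion holds: for τ ≤ t-1, Set^τ_t = Set^τ_{t-1} ∩ I^τ_t, where Set^τ_t = {μ : Cost^τ_t(μ) = Cost*_t(μ)} and I^τ_t = {μ : Cost^τ_t(μ) ≤ F(t) + β}. -/
/-- The FPOP candidate cost function `Cost^τ_t(μ)`. -/
noncomputable def fpopCost (y : ℕ → ℝ) (γ : ℝ → ℝ → ℝ) (β : ℝ) (F : ℕ → ℝ)
    (τ t : ℕ) (μ : ℝ) : ℝ :=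
  if τ = t then F t + β else F τ + β + ∑ i ∈ Finset.Ioc τ t, γ (y i) μ

/-- `Cost*_t(μ) = min over 0 ≤ τ ≤ t of Cost^τ_t(μ)`. -/
noncomputable def fpopCostStar (y : ℕ → ℝ) (γ : ℝ → ℝ → ℝ) (β : ℝ) (F : ℕ → ℝ)
    (t : ℕ) (μ : ℝ) : ℝ :=
  (Finset.range (t + 1)).inf' (Finset.nonempty_range_iff.mpr (Nat.succ_ne_zero t))
    (fun τ => fpopCost y γ β F τ t μ)

/-- `Set^τ_t = {μ : Cost^τ_t(μ) = Cost*_t(μ)}`. -/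
noncomputable def fpopSet (y : ℕ → ℝ) (γ : ℝ → ℝ → ℝ) (β : ℝ) (F : ℕ → ℝ)
    (τ t : ℕ) : Set ℝ :=
  {μ | fpopCost y γ β F τ t μ = fpopCostStar y γ β F t μ}

/-- `I^τ_t = {μ : Cost^τ_t(μ) ≤ F(t) + β}`. -/
noncomputable def fpopI (y : ℕ → ℝ) (γ : ℝ → ℝ → ℝ) (β : ℝ) (F : ℕ → ℝ)
    (τ t : ℕ) : Set ℝ :=
  {μ | fpopCost y γ β F τ t μ ≤ F t + β}

lemma fpopCost_succ (y : ℕ → ℝ) (γ : ℝ → ℝ → ℝ) (β : ℝ) (F : ℕ → ℝ)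
    (n σ : ℕ) (hσ : σ ≤ n) (μ : ℝ) :
    fpopCost y γ β F σ (n+1) μ = fpopCost y γ β F σ n μ + γ (y (n+1)) μ := by
  unfold fpopCost
  rw [if_neg (by omega), Finset.sum_Ioc_succ_top hσ]
  rcases eq_or_lt_of_le hσ with rfl | h
  · simp
  · rw [if_neg (by omega)]; ring

/-- the FPOP set-update recursion `Set^τ_t = Set^τ_{t-1} ∩ I^τ_t`. -/
theorem fpop_set_recursion (y : ℕ → ℝ) (γ : ℝ → ℝ → ℝ) (β : ℝ) (hβ : 0 ≤ β)
    (C : ℕ → ℕ → ℝ)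
    (hC : ∀ τ t : ℕ, τ < t →
      IsLeast {x : ℝ | ∃ μ : ℝ, x = ∑ i ∈ Finset.Ioc τ t, γ (y i) μ} (C τ t))
    (F : ℕ → ℝ) (hF0 : F 0 = -β)
    (hF : ∀ t : ℕ, ∀ ht : 1 ≤ t,
      F t = (Finset.range t).inf' (Finset.nonempty_range_iff.mpr (by omega))
        (fun τ => F τ + C τ t + β)) :
    ∀ t τ : ℕ, 1 ≤ t → τ ≤ t - 1 →
      fpopSet y γ β F τ t = fpopSet y γ β F τ (t - 1) ∩ fpopI y γ β F τ t := by
  intro t τ ht hτ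
  obtain ⟨n, rfl⟩ : ∃ n, t = n + 1 := ⟨t - 1, by omega⟩
  simp only [Nat.add_sub_cancel] at hτ ⊢
  ext μ
  simp only [fpopSet, fpopI, fpopCostStar, Set.mem_inter_iff, Set.mem_setOf_eq]
  constructor
  · intro h
    have hle : ∀ σ ∈ Finset.range (n+2),
        fpopCost y γ β F τ (n+1) μ ≤ fpopCost y γ β F σ (n+1) μ := by
      intro σ hσ; rw [h]; exact Finset.inf'_le _ hσ
    refine ⟨le_antisymm (Finset.le_inf' _ _ ?_)
      (Finset.inf'_le _ (Finset.mem_range.mpr (by omega))), ?_⟩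
    · intro σ hσ
      have hσn : σ ≤ n := by simpa using Nat.lt_succ_iff.mp (Finset.mem_range.mp hσ)
      have := hle σ (Finset.mem_range.mpr (by omega))
      rw [fpopCost_succ y γ β F n τ hτ μ, fpopCost_succ y γ β F n σ hσn μ] at this
      linarith
    · have := hle (n+1) (Finset.mem_range.mpr (by omega))
      simpa [fpopCost] using this
  · rintro ⟨h1, h2⟩
    refine le_antisymm (Finset.le_inf' _ _ ?_)
      (Finset.inf'_le _ (Finset.mem_range.mpr (by omega)))
    intro σ hσ
    rcases Nat.lt_succ_iff_lt_or_eq.mp (Finset.mem_range.mp hσ) with h | rfl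
    · have hσn : σ ≤ n := by omega
      rw [fpopCost_succ y γ β F n τ hτ μ, fpopCost_succ y γ β F n σ hσn μ]
      have : fpopCost y γ β F τ n μ ≤ fpopCost y γ β F σ n μ := by
        rw [h1]; exact Finset.inf'_le _ (Finset.mem_range.mpr (by omega))
      linarith
    · simpa [fpopCost] using h2
end

section
/- The pDPA set recursion holds: for k ≤ τ ≤ t-1, Set^τ_{k,t} = Set^τ_{k,t-1} ∩ I^τ_{k,t}, where Set^τ_{k,t} = {μ : Cost^τ_{k,t}(μ) = Cost*_{k,t}(μ)} and I^τ_{k,t} = {μ : Cost^τ_{k,t}(μ) ≤ C_{k-1,t}}. -/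
/-!
The recursion is a purely formal consequence of two one-step identities: appending `y_t`
adds `γ(y_t, μ)` to every old candidate `Cost^τ`, and `Cost*_{k,t}` is the minimum of the new
candidate `C_{k-1,t}` and `Cost*_{k,t-1} + γ(y_t, μ)`. Since `Cost*_{k,t-1} ≤ Cost^τ_{k,t-1}`,
the candidate `τ` attains `min (C_{k-1,t}) (Cost*_{k,t-1} + γ)` exactly when it is already optimal
at `t - 1` and does not exceed `C_{k-1,t}`.
-/

/-- The pDPA candidate cost function `Cost^τ_{k,t}(μ)`. -/
noncomputable def pdpaCost (y : ℕ → ℝ) (γ : ℝ → ℝ → ℝ) (Ck : ℕ → ℕ → ℝ)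
    (k τ t : ℕ) (μ : ℝ) : ℝ :=
  if τ = t then Ck (k - 1) t else Ck (k - 1) τ + ∑ i ∈ Finset.Ioc τ t, γ (y i) μ

/-- `Cost*_{k,t}(μ) = min over k ≤ τ ≤ t of Cost^τ_{k,t}(μ)` (junk value 0 if t < k). -/
noncomputable def pdpaCostStar (y : ℕ → ℝ) (γ : ℝ → ℝ → ℝ) (Ck : ℕ → ℕ → ℝ)
    (k t : ℕ) (μ : ℝ) : ℝ :=
  if h : k ≤ t then
    (Finset.Icc k t).inf' (Finset.nonempty_Icc.mpr h) (fun τ => pdpaCost y γ Ck k τ t μ)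
  else 0

/-- `Set^τ_{k,t} = {μ : Cost^τ_{k,t}(μ) = Cost*_{k,t}(μ)}`. -/
noncomputable def pdpaSet (y : ℕ → ℝ) (γ : ℝ → ℝ → ℝ) (Ck : ℕ → ℕ → ℝ)
    (k τ t : ℕ) : Set ℝ :=
  {μ | pdpaCost y γ Ck k τ t μ = pdpaCostStar y γ Ck k t μ}

/-- `I^τ_{k,t} = {μ : Cost^τ_{k,t}(μ) ≤ C_{k-1,t}}`. -/
noncomputable def pdpaI (y : ℕ → ℝ) (γ : ℝ → ℝ → ℝ) (Ck : ℕ → ℕ → ℝ)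
    (k τ t : ℕ) : Set ℝ :=
  {μ | pdpaCost y γ Ck k τ t μ ≤ Ck (k - 1) t}

theorem Finset.inf'_add {ι G : Type*} [AddGroup G] [LinearOrder G] [AddRightMono G]
    (s : Finset ι) (hs : s.Nonempty) (f : ι → G) (a : G) :
    s.inf' hs f + a = s.inf' hs fun i ↦ f i + a :=
  map_finset_inf' (OrderIso.addRight a) hs f

theorem add_eq_min_add_iff {α : Type*} [AddCommMonoid α] [LinearOrder α]
    [IsOrderedCancelAddMonoid α] {a b c d : α} (hba : b ≤ a) :
    a + c = min d (b + c) ↔ a = b ∧ a + c ≤ d := by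
  constructor
  · intro h
    have hac : a + c ≤ b + c := h ▸ min_le_right _ _
    exact ⟨le_antisymm (le_of_add_le_add_right hac) hba, h ▸ min_le_left _ _⟩
  · rintro ⟨rfl, hd⟩
    exact (min_eq_right hd).symm

section Pdpa

variable {y : ℕ → ℝ} {γ : ℝ → ℝ → ℝ} {Ck : ℕ → ℕ → ℝ} {k τ s : ℕ}

theorem pdpaCost_self (t : ℕ) (μ : ℝ) : pdpaCost y γ Ck k t t μ = Ck (k - 1) t :=
  if_pos rfl

theorem pdpaCost_succ (hτ : τ ≤ s) (μ : ℝ) :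
    pdpaCost y γ Ck k τ (s + 1) μ = pdpaCost y γ Ck k τ s μ + γ (y (s + 1)) μ := by
  rcases hτ.eq_or_lt with rfl | hlt
  · simp [pdpaCost, Nat.Ioc_succ_singleton]
  · simp only [pdpaCost, if_neg hlt.ne, if_neg (by omega : τ ≠ s + 1),
      Finset.sum_Ioc_succ_top hlt.le, add_assoc]

theorem pdpaCostStar_le_pdpaCost (hkτ : k ≤ τ) (hτs : τ ≤ s) (μ : ℝ) :
    pdpaCostStar y γ Ck k s μ ≤ pdpaCost y γ Ck k τ s μ := by
  rw [pdpaCostStar, dif_pos (hkτ.trans hτs)]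
  exact Finset.inf'_le _ (Finset.mem_Icc.mpr ⟨hkτ, hτs⟩)

theorem pdpaCostStar_succ (hks : k ≤ s) (μ : ℝ) :
    pdpaCostStar y γ Ck k (s + 1) μ
      = min (Ck (k - 1) (s + 1)) (pdpaCostStar y γ Ck k s μ + γ (y (s + 1)) μ) := by
  have hne : (Finset.Icc k s).Nonempty := Finset.nonempty_Icc.mpr hks
  have hold : (Finset.Icc k s).inf' hne (fun σ ↦ pdpaCost y γ Ck k σ (s + 1) μ)
      = (Finset.Icc k s).inf' hne (fun σ ↦ pdpaCost y γ Ck k σ s μ) + γ (y (s + 1)) μ := by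
    rw [Finset.inf'_add]
    exact Finset.inf'_congr hne rfl fun σ hσ ↦ pdpaCost_succ (Finset.mem_Icc.mp hσ).2 μ
  rw [pdpaCostStar, pdpaCostStar, dif_pos (by omega), dif_pos hks]
  simp_rw [← Finset.insert_Icc_right_eq_Icc_add_one (by omega : k ≤ s + 1)]
  rw [Finset.inf'_insert (H := hne), hold, pdpaCost_self]

end Pdpa

/-- the pDPA set recursion `Set^τ_{k,t} = Set^τ_{k,t-1} ∩ I^τ_{k,t}`. -/
theorem pdpa_set_recursion (y : ℕ → ℝ) (γ : ℝ → ℝ → ℝ)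
    (Ck : ℕ → ℕ → ℝ)
    : ∀ k τ t : ℕ, 1 ≤ k → k ≤ τ → τ ≤ t - 1 → k + 1 ≤ t →
      pdpaSet y γ Ck k τ t = pdpaSet y γ Ck k τ (t - 1) ∩ pdpaI y γ Ck k τ t := by
  intro k τ t _ hkτ hτ hkt
  obtain ⟨s, rfl⟩ : ∃ s, t = s + 1 := ⟨t - 1, by omega⟩
  rw [Nat.add_sub_cancel] at hτ ⊢
  ext μ
  simp only [pdpaSet, pdpaI, Set.mem_inter_iff, Set.mem_ofPred_eq, pdpaCost_succ hτ,
    pdpaCostStar_succ (hkτ.trans hτ)]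
  exact add_eq_min_add_iff (pdpaCostStar_le_pdpaCost hkτ hτ μ)
end
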